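/- Let μ/ν be a skew shape of length n. If θ = (N) with N = |μ/ν|, then for all w ∈ S_n, K_{(N), μ+δ-w(ν+δ)} = ĥ(w^{-1}), where h is the Hessenberg function of μ/ν and ĥ is its indicator. Consequently Γ^{(N)}_{μ/ν}(w) = (n!/|C(w)|) Σ_{w' ∈ C(w)} ĥ(w'). -/

import Mathlib

open Equiv

/-- `T i j` is the entry of a filling in row `i`, column `j` (0-based);
entries outside the diagram of `shape` are `0`.  Rows weakly increase,
columns strictly increase. -/
def IsSSYT (shape : ℕ → ℕ) (T : ℕ → ℕ → ℕ) : Prop :=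
  (∀ i j, j + 1 < shape i → T i j ≤ T i (j + 1)) ∧
  (∀ i j, j < shape (i + 1) → T i j < T (i + 1) j) ∧
  (∀ i j, shape i ≤ j → T i j = 0)

/-- The Kostka number: the number of semistandard Young tableaux of the given
shape in which the entry `m` appears exactly `c m` times. -/
noncomputable def kostka (shape : ℕ → ℕ) (c : ℕ → ℕ) : ℕ :=
  Set.ncard {T : ℕ → ℕ → ℕ | IsSSYT shape T ∧
    ∀ m : ℕ, {p : ℕ × ℕ | p.2 < shape p.1 ∧ T p.1 p.2 = m}.ncard = c m}

open Classical in
/-- Kostka number for an integer content, with the convention that it is `0`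
whenever the content has a negative entry. -/
noncomputable def kostkaZ (shape : ℕ → ℕ) (c : ℕ → ℤ) : ℕ :=
  if ∀ m, 0 ≤ c m then kostka shape (fun m => (c m).toNat) else 0

/-- The hook shape `(N - k, 1, ..., 1)` with `k` trailing rows of length 1. -/
def hookShape (N k : ℕ) : ℕ → ℕ :=
  fun i => if i = 0 then N - k else if i ≤ k then 1 else 0

/-- Extend a sequence indexed by `Fin n` to all of `ℕ` by zeros. -/
def extendSeq {n : ℕ} (a : Fin n → ℤ) : ℕ → ℤ :=
  fun m => if h : m < n then a ⟨m, h⟩ else 0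

/-- The staircase `δ = (n-1, n-2, ..., 1, 0)`. -/
def deltaSeq (n : ℕ) : Fin n → ℤ := fun i => (n : ℤ) - 1 - (i.val : ℤ)

/-- The sequence `μ + δ - w(ν + δ)`, where a permutation acts on sequences by
shuffling: `(w(a))_i = a_{w⁻¹(i)}`. -/
def hatSeq {n : ℕ} (μ ν : Fin n → ℕ) (w : Perm (Fin n)) : Fin n → ℤ :=
  fun i => ((μ i : ℤ) + deltaSeq n i) - ((ν (w⁻¹ i) : ℤ) + deltaSeq n (w⁻¹ i))

/-- `h` is the Hessenberg function of the skew shape `μ/ν`: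
`h j = max { i | μ i - ν j + j - i ≥ 0 }`. -/
def IsHessOf {n : ℕ} (μ ν : Fin n → ℕ) (h : Fin n → Fin n) : Prop :=
  ∀ j : Fin n, (ν j + ((h j : ℕ)) ≤ μ (h j) + (j : ℕ)) ∧
    ∀ i : Fin n, ν j + (i : ℕ) ≤ μ i + (j : ℕ) → i ≤ h j

/-- The indicator `ĥ(w)` of the condition `w(i) ≤ h(i)` for all `i`. -/
def hhat {n : ℕ} (h : Fin n → Fin n) (w : Perm (Fin n)) : ℕ :=
  if ∀ i, w i ≤ h i then 1 else 0

/-- The modified Hessenberg function `h^J`: `h^J(i) = h(i) - 1` when `i ∈ J` and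
`μ_{h(i)} - ν_i + i - h(i) = 0`, and `h^J(i) = h(i)` otherwise. -/
def hJfun {n : ℕ} (μ ν : Fin n → ℕ) (h : Fin n → Fin n) (J : Finset (Fin n)) :
    Fin n → Fin n :=
  fun i => if i ∈ J ∧ μ (h i) + (i : ℕ) = ν i + ((h i : ℕ)) then
      ⟨(h i : ℕ) - 1, Nat.lt_of_le_of_lt (Nat.sub_le _ _) (h i).isLt⟩
    else h i

open Classical in
/-- The conjugacy class of `w` in the symmetric group, as a finset. -/
noncomputable def conjClass {n : ℕ} (w : Perm (Fin n)) : Finset (Perm (Fin n)) :=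
  Finset.univ.filter (fun v => IsConj w v)

/-- The Stanley–Stembridge character
`Γ_h(w) = (n! / |C(w)|) · Σ_{w' ∈ C(w)} ĥ(w')`. -/
noncomputable def GammaH {n : ℕ} (h : Fin n → Fin n) (w : Perm (Fin n)) : ℚ :=
  ((n.factorial : ℚ) / ((conjClass w).card : ℚ)) * ∑ v ∈ conjClass w, (hhat h v : ℚ)

/-- The immanant character
`Γ^θ_{μ/ν}(w) = (n! / |C(w)|) · Σ_{w' ∈ C(w)} K_{θ, μ+δ-w'(ν+δ)}`. -/
noncomputable def GammaTheta {n : ℕ} (shape : ℕ → ℕ) (μ ν : Fin n → ℕ)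
    (w : Perm (Fin n)) : ℚ :=
  ((n.factorial : ℚ) / ((conjClass w).card : ℚ)) *
    ∑ v ∈ conjClass w, (kostkaZ shape (extendSeq (hatSeq μ ν v)) : ℚ)

/-! Along the one-row shape `(N)` a semistandard tableau is a weakly increasing word, so it is
determined by its content: its `j`-th letter is less than `m` exactly when `j` is less than the
number of letters below `m`.  Hence `K_{(N),c}` is `1` for every content `c ≥ 0` of size `N`
(and `0` by convention otherwise).  For `c = μ + δ - w(ν + δ)`, which has size `|μ/ν| = N`,
the entry in position `i` is `μ_i - i - ν_{w i} + w i`, nonnegative iff `i ≤ h(w i)` by the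
definition of the Hessenberg function; so `c ≥ 0` iff `w⁻¹ ≤ h` pointwise. -/

open Finset

lemma Finset.eq_range_card_of_isLowerSet {s : Finset ℕ} (hs : IsLowerSet (s : Set ℕ)) :
    s = range #s := by
  rcases hs.eq_univ_or_Iio with huniv | ⟨a, ha⟩
  · exact absurd (huniv ▸ s.finite_toSet) Set.infinite_univ
  · obtain rfl : s = range a := by rw [← coe_inj, ha, coe_range]
    rw [card_range]

section OneRow

def contentBelow (c : ℕ → ℕ) (m : ℕ) : ℕ := ∑ k ∈ range m, c k

/-- The `j`-th letter (from `0`) of the weakly increasing word with content `c`. -/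
noncomputable def rowEntry (c : ℕ → ℕ) (j : ℕ) : ℕ :=
  sInf {m | j < contentBelow c (m + 1)}

def rowTableau (N : ℕ) (f : ℕ → ℕ) : ℕ → ℕ → ℕ :=
  fun i j => if i = 0 ∧ j < N then f j else 0

variable {N : ℕ} {c : ℕ → ℕ}

lemma contentBelow_mono (c : ℕ → ℕ) : Monotone (contentBelow c) := fun _ _ h =>
  sum_le_sum_of_subset (range_subset_range.2 h)

lemma contentBelow_succ (c : ℕ → ℕ) (m : ℕ) :
    contentBelow c (m + 1) = contentBelow c m + c m :=
  sum_range_succ c m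

lemma contentBelow_le {n₀ : ℕ} (hc : ∀ m, n₀ ≤ m → c m = 0)
    (hsum : contentBelow c n₀ = N) (m : ℕ) : contentBelow c m ≤ N := by
  rcases le_total m n₀ with hm | hm
  · exact hsum ▸ contentBelow_mono c hm
  · rw [← hsum, contentBelow, contentBelow, ← sum_range_add_sum_Ico _ hm,
      sum_eq_zero fun k hk => hc k (mem_Ico.1 hk).1, add_zero]

lemma rowEntry_lt_iff {j k : ℕ} (hj : j < contentBelow c k) (m : ℕ) :
    rowEntry c j < m ↔ j < contentBelow c m := by
  have hne : {m | j < contentBelow c (m + 1)}.Nonempty :=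
    ⟨k, hj.trans_le (contentBelow_mono c k.le_succ)⟩
  rw [rowEntry, csInf_lt_iff (OrderBot.bddBelow _) hne]
  constructor
  · rintro ⟨l, hl, hlm⟩
    exact hl.trans_le (contentBelow_mono c hlm)
  · intro h
    obtain ⟨l, rfl⟩ : ∃ l, m = l + 1 :=
      Nat.exists_eq_succ_of_ne_zero (by rintro rfl; simp [contentBelow] at h)
    exact ⟨l, h, l.lt_succ_self⟩

lemma lt_iff_lt_contentBelow {f : ℕ → ℕ} (hf : MonotoneOn f (Set.Iio N))
    (hc : ∀ m, #{j ∈ range N | f j = m} = c m) {j : ℕ} (hj : j < N) (m : ℕ) :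
    f j < m ↔ j < contentBelow c m := by
  set S := {j ∈ range N | f j < m}
  have hcard : #S = contentBelow c m := by
    rw [card_eq_sum_card_fiberwise (f := f) (t := range m) fun x hx => by
      simpa using (mem_filter.1 hx).2]
    refine sum_congr rfl fun k hk => ?_
    rw [← hc k, filter_filter]
    refine congrArg card (filter_congr fun x _ => ?_)
    simp only [mem_range] at hk
    constructor
    · exact And.right
    · rintro rfl
      exact ⟨hk, rfl⟩
  have hlower : IsLowerSet (S : Set ℕ) := by
    intro a b hba ha
    simp only [S, coe_filter, mem_range, Set.mem_ofPred_eq] at ha ⊢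
    exact ⟨hba.trans_lt ha.1, (hf (hba.trans_lt ha.1) ha.1 hba).trans_lt ha.2⟩
  have hmem : j ∈ S ↔ j ∈ range (contentBelow c m) := by
    rw [← hcard, ← eq_range_card_of_isLowerSet hlower]
  simpa [S, hj] using hmem

lemma monotoneOn_rowEntry {k : ℕ} (hk : N ≤ contentBelow c k) :
    MonotoneOn (rowEntry c) (Set.Iio N) := by
  intro j hj j' hj' hjj'
  refine not_lt.1 fun hlt => lt_irrefl (rowEntry c j) ?_
  rw [rowEntry_lt_iff (hj'.trans_le hk)] at hlt
  rw [rowEntry_lt_iff (hj.trans_le hk)]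
  exact hjj'.trans_lt hlt

lemma card_rowEntry_eq {n₀ : ℕ} (hc : ∀ m, n₀ ≤ m → c m = 0)
    (hsum : contentBelow c n₀ = N) (m : ℕ) : #{j ∈ range N | rowEntry c j = m} = c m := by
  have hlt {j : ℕ} (hj : j < N) := rowEntry_lt_iff (c := c) (hsum ▸ hj)
  have hIco : {j ∈ range N | rowEntry c j = m} =
      Ico (contentBelow c m) (contentBelow c (m + 1)) := by
    ext j
    simp only [mem_filter, mem_range, mem_Ico]
    constructor
    · rintro ⟨hj, rfl⟩
      exact ⟨not_lt.1 ((hlt hj _).not.1 (lt_irrefl _)), (hlt hj _).1 (Nat.lt_succ_self _)⟩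
    · rintro ⟨hm, hm'⟩
      have hj : j < N := hm'.trans_le (contentBelow_le hc hsum _)
      have := (hlt hj m).not.2 (not_lt.2 hm)
      have := (hlt hj (m + 1)).2 hm'
      exact ⟨hj, by omega⟩
  rw [hIco, Nat.card_Ico, contentBelow_succ, Nat.add_sub_cancel_left]

lemma rowTableau_congr {f g : ℕ → ℕ} (hfg : ∀ j < N, f j = g j) :
    rowTableau N f = rowTableau N g := by
  funext i j
  by_cases hij : i = 0 ∧ j < N
  · simp only [rowTableau, if_pos hij, hfg j hij.2]
  · simp only [rowTableau, if_neg hij]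

lemma isSSYT_hookShape_zero_iff {T : ℕ → ℕ → ℕ} :
    IsSSYT (hookShape N 0) T ↔ MonotoneOn (T 0) (Set.Iio N) ∧ T = rowTableau N (T 0) := by
  have hshape (i : ℕ) : hookShape N 0 i = if i = 0 then N else 0 := by
    by_cases hi : i = 0 <;> simp [hookShape, hi]
  simp only [IsSSYT, hshape]
  constructor
  · rintro ⟨hrow, -, hzero⟩
    refine ⟨monotoneOn_of_le_add_one Set.ordConnected_Iio fun j _ _ hj =>
      hrow 0 j (by simpa using hj), ?_⟩
    funext i j
    by_cases hij : i = 0 ∧ j < N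
    · obtain ⟨rfl, _⟩ := hij; simp [rowTableau, *]
    · rw [rowTableau, if_neg hij]; exact hzero i j (by split_ifs <;> omega)
  · rintro ⟨hmono, hT⟩
    rw [hT]
    refine ⟨fun i j hj => ?_, fun i j hj => by simp at hj, fun i j hj => ?_⟩
    · split_ifs at hj with hi
      · subst hi
        simp only [rowTableau, true_and, if_pos hj, if_pos (Nat.lt_of_succ_lt hj)]
        exact hmono (Nat.lt_of_succ_lt hj) hj j.le_succ
      · omega
    · simp only [rowTableau]
      split_ifs at hj ⊢ <;> omega

lemma ncard_content_hookShape_zero (T : ℕ → ℕ → ℕ) (m : ℕ) :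
    {p : ℕ × ℕ | p.2 < hookShape N 0 p.1 ∧ T p.1 p.2 = m}.ncard =
      #{j ∈ range N | T 0 j = m} := by
  have hcells : {p : ℕ × ℕ | p.2 < hookShape N 0 p.1 ∧ T p.1 p.2 = m} =
      Prod.mk 0 '' ↑{j ∈ range N | T 0 j = m} := by
    ext ⟨i, j⟩
    rcases eq_or_ne i 0 with rfl | hi
    · simp [hookShape]
    · simp [hookShape, hi, hi.symm]
  rw [hcells, Set.ncard_image_of_injective _ (Prod.mk_right_injective 0), Set.ncard_coe_finset]

theorem kostka_hookShape_zero {n₀ : ℕ} (hc : ∀ m, n₀ ≤ m → c m = 0)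
    (hsum : contentBelow c n₀ = N) : kostka (hookShape N 0) c = 1 := by
  rw [kostka, Set.ncard_eq_one]
  refine ⟨rowTableau N (rowEntry c), Set.eq_singleton_iff_unique_mem.2 ⟨?_, ?_⟩⟩
  · have hrow : ∀ j < N, rowTableau N (rowEntry c) 0 j = rowEntry c j :=
      fun j hj => if_pos ⟨rfl, hj⟩
    refine ⟨isSSYT_hookShape_zero_iff.2 ⟨?_, (rowTableau_congr hrow).symm⟩, fun m => ?_⟩
    · exact (monotoneOn_rowEntry hsum.ge).congr fun j hj => (hrow j hj).symm
    · rw [ncard_content_hookShape_zero, ← card_rowEntry_eq hc hsum m]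
      exact congrArg card (filter_congr fun j hj => by rw [hrow j (mem_range.1 hj)])
  · rintro T ⟨hT, hTc⟩
    obtain ⟨hmono, hT⟩ := isSSYT_hookShape_zero_iff.1 hT
    simp_rw [ncard_content_hookShape_zero] at hTc
    refine hT.trans (rowTableau_congr fun j hj => eq_of_forall_gt_iff fun m => ?_)
    exact (lt_iff_lt_contentBelow hmono hTc hj m).trans (rowEntry_lt_iff (hsum ▸ hj) m).symm

end OneRow

theorem kostkaZ_hookShape_zero_extendSeq {n N : ℕ} {a : Fin n → ℤ} (ha : ∑ i, a i = N) :
    kostkaZ (hookShape N 0) (extendSeq a) = if ∀ i, 0 ≤ a i then 1 else 0 := by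
  have hext (i : Fin n) : extendSeq a i = a i := dif_pos i.isLt
  by_cases hpos : ∀ i, 0 ≤ a i
  · have hpos' (m : ℕ) : 0 ≤ extendSeq a m := by
      unfold extendSeq
      split_ifs
      exacts [hpos _, le_rfl]
    rw [if_pos hpos, kostkaZ, if_pos hpos']
    refine kostka_hookShape_zero (n₀ := n) (fun m hm => by simp [extendSeq, hm.not_gt]) ?_
    rw [contentBelow, ← Fin.sum_univ_eq_sum_range (fun m => (extendSeq a m).toNat)]
    zify
    simp only [hext, Int.toNat_of_nonneg (hpos _), ha]
  · rw [if_neg hpos, kostkaZ, if_neg fun h => hpos fun i => hext i ▸ h i]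

lemma IsHessOf.le_iff {n : ℕ} {μ ν : Fin n → ℕ} {h : Fin n → Fin n}
    (hh : IsHessOf μ ν h) (hμ : Antitone μ) (i j : Fin n) :
    i ≤ h j ↔ ν j + i ≤ μ i + j := by
  refine ⟨fun hij => ?_, (hh j).2 i⟩
  have := (hh j).1
  have := hμ hij
  have : (i : ℕ) ≤ h j := hij
  omega

theorem kostkaZ_hookShape_zero_eq_hhat_inv {n N : ℕ} {μ ν : Fin n → ℕ} (hμ : Antitone μ)
    (hle : ∀ i, ν i ≤ μ i) (hN : N = ∑ i : Fin n, (μ i - ν i)) {h : Fin n → Fin n}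
    (hh : IsHessOf μ ν h) (w : Perm (Fin n)) :
    kostkaZ (hookShape N 0)
        (extendSeq fun i : Fin n =>
          ((μ i : ℤ) + deltaSeq n i) - ((ν (w i) : ℤ) + deltaSeq n (w i))) =
      hhat h w⁻¹ := by
  set a : Fin n → ℤ := fun i =>
    ((μ i : ℤ) + deltaSeq n i) - ((ν (w i) : ℤ) + deltaSeq n (w i))
  have hsum : ∑ i, a i = N := by
    rw [sum_sub_distrib, Equiv.sum_comp w fun j => (ν j : ℤ) + deltaSeq n j,
      ← sum_sub_distrib, hN]
    push_cast [Nat.cast_sub (hle _)]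
    exact sum_congr rfl fun i _ => by ring
  have hpos : (∀ i, 0 ≤ a i) ↔ ∀ j, w⁻¹ j ≤ h j := by
    refine Iff.trans (forall_congr' fun i => ?_)
      (w.forall_congr_right (q := fun j => w⁻¹ j ≤ h j))
    rw [Perm.inv_def, symm_apply_apply, hh.le_iff hμ]
    simp only [a, deltaSeq]
    omega
  rw [kostkaZ_hookShape_zero_extendSeq hsum, hhat, if_congr hpos rfl rfl]

theorem stmt10_general {n N : ℕ} (μ ν : Fin n → ℕ) (hμ : Antitone μ)
    (hle : ∀ i, ν i ≤ μ i) (hN : N = ∑ i : Fin n, (μ i - ν i))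
    (h : Fin n → Fin n) (hh : IsHessOf μ ν h) (w : Perm (Fin n)) :
    kostkaZ (hookShape N 0)
        (extendSeq (fun i : Fin n =>
          ((μ i : ℤ) + deltaSeq n i) - ((ν (w i) : ℤ) + deltaSeq n (w i)))) =
      hhat h w⁻¹ ∧
    GammaTheta (hookShape N 0) μ ν w =
      ((n.factorial : ℚ) / ((conjClass w).card : ℚ)) *
        ∑ v ∈ conjClass w, (hhat h v : ℚ) := by
  refine ⟨kostkaZ_hookShape_zero_eq_hhat_inv hμ hle hN hh w, ?_⟩
  refine congrArg _ (sum_congr rfl fun v _ => ?_)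
  have hv := kostkaZ_hookShape_zero_eq_hhat_inv hμ hle hN hh v⁻¹
  rw [inv_inv] at hv
  exact congrArg _ hv

/-- Lemma 2.10: for `θ = (N)`,
`K_{(N), μ+δ-w(ν+δ)} = ĥ(w⁻¹)`, and consequently
`Γ^{(N)}_{μ/ν}(w) = (n!/|C(w)|) Σ_{w' ∈ C(w)} ĥ(w')`. -/
theorem stmt10 {n N : ℕ} (μ ν : Fin n → ℕ) (hμ : Antitone μ) (hν : Antitone ν)
    (hle : ∀ i, ν i ≤ μ i) (hN : N = ∑ i : Fin n, (μ i - ν i))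
    (h : Fin n → Fin n) (hh : IsHessOf μ ν h) (w : Perm (Fin n)) :
    kostkaZ (hookShape N 0)
        (extendSeq (fun i : Fin n =>
          ((μ i : ℤ) + deltaSeq n i) - ((ν (w i) : ℤ) + deltaSeq n (w i)))) =
      hhat h w⁻¹ ∧
    GammaTheta (hookShape N 0) μ ν w =
      ((n.factorial : ℚ) / ((conjClass w).card : ℚ)) *
        ∑ v ∈ conjClass w, (hhat h v : ℚ) :=
  stmt10_general μ ν hμ hle hN h hh w
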